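/- Cayley's forest recursion via uniform chains: if c(n,k) denotes the number of forests labeled by {1,…,n} with root set {1,…,k}, then c(n, k+1) = (k+1)·c(n,k)/(k·n) for 1 ≤ k ≤ n − 2. -/

import Mathlib

open Finset

/-- A spanning forest of `S` with root set `R`, encoded as a successor function:
roots are fixed points, and every state eventually reaches `R` under iteration. -/
def IsForest {S : Type*} [Fintype S] [DecidableEq S] (R : Finset S) (f : S → S) : Prop :=
  (∀ i ∈ R, f i = i) ∧ ∀ i : S, ∃ n : ℕ, f^[n] i ∈ R

/-- The `P`-weight of a forest: product of transition probabilities over its directed edges. -/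
noncomputable def forestWt {S : Type*} [Fintype S] [DecidableEq S]
    (p : S → S → ℝ) (R : Finset S) (f : S → S) : ℝ :=
  ∏ i ∈ Rᶜ, p i (f i)

open Classical in
/-- `w p R`: the total `P`-weight of spanning forests with root set `R`. -/
noncomputable def w {S : Type*} [Fintype S] [DecidableEq S]
    (p : S → S → ℝ) (R : Finset S) : ℝ :=
  ∑ f : S → S, if IsForest R f then forestWt p R f else 0

open Classical in
/-- `wroot p A i j`: total weight of forests with root set `A` in which the tree
containing `i` has root `j`. -/
noncomputable def wroot {S : Type*} [Fintype S] [DecidableEq S]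
    (p : S → S → ℝ) (A : Finset S) (i j : S) : ℝ :=
  ∑ f : S → S, if IsForest A f ∧ ∃ n : ℕ, f^[n] i = j then forestWt p A f else 0

/-- `p` is a stochastic matrix. -/
def IsStochastic {S : Type*} [Fintype S] (p : S → S → ℝ) : Prop :=
  (∀ i j, 0 ≤ p i j) ∧ ∀ i, ∑ j, p i j = 1

/-- `p` is irreducible. -/
def PIrreducible {S : Type*} [Fintype S] [DecidableEq S] (p : S → S → ℝ) : Prop :=
  ∀ i j : S, ∃ n : ℕ, 0 < ((Matrix.of p) ^ n) i j

/-- Weight of a path starting at `i` with successive states given by the list. -/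
def wt {S : Type*} (p : S → S → ℝ) : S → List S → ℝ
  | _, [] => 1
  | i, j :: l => p i j * wt p j l

/-- `cayley n k`: the number of forests labeled by `{1,…,n}` with root set `{1,…,k}`. -/
noncomputable def cayley (n k : ℕ) : ℕ :=
  Nat.card {f : Fin n → Fin n // IsForest (Finset.univ.filter fun i : Fin n => (i : ℕ) < k) f}

/-!
Cutting the edge out of a non-root vertex `j` turns a forest with root set `R` into a forest
with root set `R ∪ {j}`; the old forest is recovered from the new one together with the cut
edge's target, which may be any vertex outside the new tree of `j`. Hence, with `n` vertices,
`#F(R) = ∑_{f ∈ F(R ∪ {j})} (n - |tree of j in f|)`. Relabelling the roots shows that every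
root's tree has the same total size over `F(R ∪ {j})`, and the `#R + 1` trees of each forest
partition the vertices, so that total is `n · #F(R ∪ {j}) / (#R + 1)`.
-/

open Function

section Dynamics

variable {α : Type*}

lemma iterate_eq_of_le_of_isFixedPt {f : α → α} {x : α} {a b : ℕ}
    (ha : IsFixedPt f (f^[a] x)) (hab : a ≤ b) : f^[b] x = f^[a] x := by
  obtain ⟨d, rfl⟩ := Nat.exists_eq_add_of_le hab
  rw [Nat.add_comm, iterate_add_apply, ha.iterate d]

lemma eq_of_iterate_eq_of_isFixedPt {f : α → α} {x j j' : α} {a b : ℕ}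
    (ha : f^[a] x = j) (hj : IsFixedPt f j) (hb : f^[b] x = j') (hj' : IsFixedPt f j') :
    j = j' := by
  subst ha hb
  rcases le_total a b with hab | hba
  · exact (iterate_eq_of_le_of_isFixedPt hj hab).symm
  · exact iterate_eq_of_le_of_isFixedPt hj' hba

lemma iterate_update_of_forall_iterate_ne [DecidableEq α] {f : α → α} {a b x : α}
    (h : ∀ m, f^[m] x ≠ a) (m : ℕ) : (update f a b)^[m] x = f^[m] x := by
  induction m generalizing x with
  | zero => rfl
  | succ m ih =>
    have hx : x ≠ a := h 0
    rw [iterate_succ_apply, iterate_succ_apply, update_of_ne hx,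
      ih fun t => by simpa only [← iterate_succ_apply] using h (t + 1)]

lemma exists_iterate_mem_of_eqOn_compl {f g : α → α} {s t : Finset α} (hst : s ⊆ t)
    (hfg : ∀ x ∉ t, g x = f x) {x : α} {m : ℕ} (hm : f^[m] x ∈ s) :
    ∃ m', g^[m'] x ∈ t := by
  induction m generalizing x with
  | zero => exact ⟨0, hst hm⟩
  | succ m ih =>
    by_cases hx : x ∈ t
    · exact ⟨0, hx⟩
    · obtain ⟨m', hm'⟩ := ih (by rwa [iterate_succ_apply] at hm)
      exact ⟨m' + 1, by rwa [iterate_succ_apply, hfg x hx]⟩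

lemma exists_iterate_mem_of_insert [DecidableEq α] {g : α → α} {s : Finset α} {j : α}
    (hg : ∀ x, ∃ m, g^[m] x ∈ insert j s) (hj : ∃ m, g^[m] (g j) ∈ s) (x : α) :
    ∃ m, g^[m] x ∈ s := by
  obtain ⟨m, hm⟩ := hg x
  rcases mem_insert.mp hm with hjm | hs
  · obtain ⟨m', hm'⟩ := hj
    exact ⟨m' + 1 + m, by rwa [iterate_add_apply, hjm, iterate_succ_apply]⟩
  · exact ⟨m, hs⟩

lemma semiconj_conj (σ : Equiv.Perm α) (f : α → α) : Semiconj σ f (σ.conj f) :=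
  fun x => by simp

end Dynamics

variable {S : Type*} [Fintype S] [DecidableEq S] {R : Finset S} {f : S → S}

open Classical in
/-- For a root `j` of a forest `f`, the tree rooted at `j`. -/
noncomputable def basin (f : S → S) (j : S) : Finset S :=
  univ.filter fun v => ∃ m, f^[m] v = j

omit [DecidableEq S] in
lemma mem_basin {j v : S} : v ∈ basin f j ↔ ∃ m, f^[m] v = j := by
  simp [basin]

open Classical in
noncomputable def forests (R : Finset S) : Finset (S → S) :=
  univ.filter (IsForest R)

lemma mem_forests : f ∈ forests R ↔ IsForest R f := by
  simp [forests]

namespace IsForest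

lemma mem_of_isPeriodicPt (hf : IsForest R f) {j : S} {m : ℕ} (hm : 0 < m)
    (hj : IsPeriodicPt f m j) : j ∈ R := by
  obtain ⟨t, ht⟩ := hf.2 j
  have hfix : IsFixedPt f (f^[t] j) := hf.1 _ ht
  have hle : t ≤ m * (t + 1) := by nlinarith
  rwa [← iterate_eq_of_le_of_isFixedPt hfix hle, hj.mul_const (t + 1)] at ht

lemma sum_card_basin (hf : IsForest R f) : ∑ j ∈ R, #(basin f j) = Fintype.card S := by
  have hdisj : (R : Set S).PairwiseDisjoint (basin f) := by
    intro j hj j' hj' hne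
    refine disjoint_left.mpr fun v hv hv' => hne ?_
    obtain ⟨a, ha⟩ := mem_basin.mp hv
    obtain ⟨b, hb⟩ := mem_basin.mp hv'
    exact eq_of_iterate_eq_of_isFixedPt ha (hf.1 j hj) hb (hf.1 j' hj')
  have hcover : R.biUnion (basin f) = univ :=
    eq_univ_of_forall fun v => by
      obtain ⟨m, hm⟩ := hf.2 v
      exact mem_biUnion.mpr ⟨_, hm, mem_basin.mpr ⟨m, rfl⟩⟩
  rw [← card_biUnion hdisj, hcover, card_univ]

lemma update_self (hf : IsForest R f) (j : S) : IsForest (insert j R) (update f j j) := by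
  refine ⟨fun i hi => ?_, fun x => ?_⟩
  · rcases eq_or_ne i j with rfl | hij
    · exact Function.update_self ..
    · rw [update_of_ne hij]
      exact hf.1 i (mem_of_mem_insert_of_ne hi hij)
  · obtain ⟨m, hm⟩ := hf.2 x
    exact exists_iterate_mem_of_eqOn_compl (subset_insert j R)
      (fun y hy => update_of_ne (ne_of_mem_of_not_mem (mem_insert_self j R) hy).symm ..) hm

lemma apply_notMem_basin_update_self (hf : IsForest R f) {j : S} (hj : j ∉ R) :
    f j ∉ basin (update f j j) j := by
  have hne : ∀ m, f^[m] (f j) ≠ j := fun m hm =>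
    hj (hf.mem_of_isPeriodicPt m.succ_pos (by rwa [IsPeriodicPt, IsFixedPt, iterate_succ_apply]))
  rw [mem_basin]
  rintro ⟨m, hm⟩
  exact hne m (by rwa [iterate_update_of_forall_iterate_ne hne] at hm)

lemma update_of_notMem_basin {j v : S} (hj : j ∉ R) (hf : IsForest (insert j R) f)
    (hv : v ∉ basin f j) : IsForest R (update f j v) := by
  have hfg : ∀ x ∉ insert j R, update f j v x = f x := fun x hx =>
    update_of_ne (ne_of_mem_of_not_mem (mem_insert_self j R) hx).symm ..
  refine ⟨fun i hi => ?_, exists_iterate_mem_of_insert (j := j) (fun x => ?_) ?_⟩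
  · have hij : i ≠ j := ne_of_mem_of_not_mem hi hj
    rw [update_of_ne hij, hf.1 i (mem_insert_of_mem hi)]
  · obtain ⟨m, hm⟩ := hf.2 x
    exact exists_iterate_mem_of_eqOn_compl subset_rfl hfg hm
  · have hv' : ∀ m, f^[m] v ≠ j := fun m hm => hv (mem_basin.mpr ⟨m, hm⟩)
    obtain ⟨m, hm⟩ := hf.2 v
    refine ⟨m, ?_⟩
    rw [Function.update_self, iterate_update_of_forall_iterate_ne hv']
    exact (mem_insert.mp hm).resolve_left (hv' m)

lemma conj {σ : Equiv.Perm S} (hσ : ∀ i, σ i ∈ R ↔ i ∈ R) (hf : IsForest R f) :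
    IsForest R (σ.conj f) := by
  refine ⟨fun i hi => ?_, fun i => ?_⟩
  · have hi' : σ.symm i ∈ R := by rwa [← hσ, Equiv.apply_symm_apply]
    simp [hf.1 _ hi']
  · obtain ⟨m, hm⟩ := hf.2 (σ.symm i)
    refine ⟨m, ?_⟩
    rw [← σ.apply_symm_apply i, ← (semiconj_conj σ f).iterate_right m]
    exact (hσ _).mpr hm

end IsForest

lemma isForest_conj_iff {σ : Equiv.Perm S} (hσ : ∀ i, σ i ∈ R ↔ i ∈ R) :
    IsForest R (σ.conj f) ↔ IsForest R f := by
  refine ⟨fun h => ?_, IsForest.conj hσ⟩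
  have hσ' : ∀ i, σ.symm i ∈ R ↔ i ∈ R := fun i => by rw [← hσ, Equiv.apply_symm_apply]
  simpa only [← Equiv.conj_symm, Equiv.symm_apply_apply] using h.conj hσ'

omit [Fintype S] in
lemma swap_apply_mem_iff {j j' : S} (hj : j ∈ R) (hj' : j' ∈ R) (i : S) :
    Equiv.swap j j' i ∈ R ↔ i ∈ R := by
  rw [Equiv.swap_apply_def]
  split_ifs with h h' <;> simp_all

omit [DecidableEq S] in
lemma card_basin_conj (σ : Equiv.Perm S) (j : S) :
    #(basin (σ.conj f) (σ j)) = #(basin f j) := by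
  refine (card_equiv σ fun v => ?_).symm
  have hiter (m : ℕ) : (σ.conj f)^[m] (σ v) = σ (f^[m] v) :=
    ((semiconj_conj σ f).iterate_right m v).symm
  simp only [mem_basin, hiter, σ.apply_eq_iff_eq]

lemma sum_card_basin_eq_of_mem {j j' : S} (hj : j ∈ R) (hj' : j' ∈ R) :
    ∑ f ∈ forests R, #(basin f j) = ∑ f ∈ forests R, #(basin f j') := by
  refine sum_equiv (Equiv.swap j j').conj (fun f => ?_) (fun f _ => ?_)
  · simp only [mem_forests, isForest_conj_iff (swap_apply_mem_iff hj hj')]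
  · rw [← card_basin_conj (Equiv.swap j j') j, Equiv.swap_apply_left]

lemma card_mul_sum_card_basin {j : S} (hj : j ∈ R) :
    #R * ∑ f ∈ forests R, #(basin f j) = #(forests R) * Fintype.card S := by
  calc #R * ∑ f ∈ forests R, #(basin f j)
      = ∑ j' ∈ R, ∑ f ∈ forests R, #(basin f j') := by
        rw [sum_congr rfl fun j' hj' => sum_card_basin_eq_of_mem hj' hj, sum_const, smul_eq_mul]
    _ = ∑ f ∈ forests R, ∑ j' ∈ R, #(basin f j') := sum_comm
    _ = ∑ f ∈ forests R, Fintype.card S :=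
        sum_congr rfl fun f hf => (mem_forests.mp hf).sum_card_basin
    _ = #(forests R) * Fintype.card S := by rw [sum_const, smul_eq_mul]

lemma card_forests_eq_sum_card_compl_basin {j : S} (hj : j ∉ R) :
    #(forests R) = ∑ f ∈ forests (insert j R), #(basin f j)ᶜ := by
  rw [← card_sigma]
  refine card_nbij' (fun f => ⟨update f j j, f j⟩) (fun p => update p.1 j p.2)
    (fun f hf => ?_) (fun p hp => ?_) (fun f _ => ?_) (fun p hp => ?_)
  · have hf : IsForest R f := mem_forests.mp hf
    simpa [mem_sigma, mem_forests] using
      ⟨hf.update_self j, hf.apply_notMem_basin_update_self hj⟩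
  · simp only [coe_sigma, Set.mem_sigma_iff, mem_coe, mem_forests, mem_compl] at hp
    exact mem_forests.mpr (hp.1.update_of_notMem_basin hj hp.2)
  · simp
  · obtain ⟨g, v⟩ := p
    simp only [coe_sigma, Set.mem_sigma_iff, mem_coe, mem_forests] at hp
    have hroot : g j = j := hp.1.1 j (mem_insert_self j R)
    simp [hroot]

lemma card_forests_insert_mul {j : S} (hj : j ∉ R) :
    #(forests (insert j R)) * (#R * Fintype.card S) = (#R + 1) * #(forests R) := by
  have hcut : #(forests R) + ∑ f ∈ forests (insert j R), #(basin f j) =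
      #(forests (insert j R)) * Fintype.card S := by
    rw [card_forests_eq_sum_card_compl_basin hj, ← sum_add_distrib,
      sum_congr rfl fun f _ => card_compl_add_card _, sum_const, smul_eq_mul]
  have hsym := card_mul_sum_card_basin (mem_insert_self j R)
  rw [card_insert_of_notMem hj] at hsym
  -- `(#R + 1) * hcut - hsym`
  nlinarith

lemma cayley_eq_card_forests (n k : ℕ) :
    cayley n k = #(forests (univ.filter fun i : Fin n => (i : ℕ) < k)) := by
  classical
  rw [cayley, Nat.card_eq_fintype_card, Fintype.card_subtype, forests]

/-- Cayley's forest recursion: `c(n,k+1) = (k+1)·c(n,k)/(k·n)` for `1 ≤ k ≤ n-2`. -/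
theorem cayley_recursion (n k : ℕ) (h1 : 1 ≤ k) (h2 : k ≤ n - 2) :
    cayley n (k + 1) * (k * n) = (k + 1) * cayley n k := by
  have hk : k < n := by omega
  set R : Finset (Fin n) := univ.filter fun i => (i : ℕ) < k
  have hcard : #R = k := by simp [R, Fin.card_filter_val_lt, hk.le]
  have hkR : (⟨k, hk⟩ : Fin n) ∉ R := by simp [R]
  have hinsert : univ.filter (fun i : Fin n => (i : ℕ) < k + 1) = insert ⟨k, hk⟩ R := by
    ext i
    simp only [R, mem_filter, mem_univ, true_and, mem_insert, Fin.ext_iff]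
    omega
  have := card_forests_insert_mul hkR
  rwa [hcard, Fintype.card_fin, ← hinsert, ← cayley_eq_card_forests, ← cayley_eq_card_forests]
    at this
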